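/- Let N be a finite free module of rank 4 over a commutative ring, N* its dual, and consider the map from ⋀^2 N to Hom(N*, N) sending a∧b to the map f ↦ f(a)b - f(b)a. If A ⊆ N' is a lattice (finite free W'-submodule of full rank) in a 4-dimensional vector space N' over the fraction field of a DVR W', then an element x ∈ ⋀^2 N' satisfies x(A*) ⊆ A if and only if x ∈ ⋀^2 A, where A* ⊆ N'* is the dual lattice of functionals integrally valued on A. -/

import Mathlib

/-!
A full lattice `A` over the principal ideal domain `W'` is free, and a `W'`-basis `e` of `A` is a
`K`-basis of `N'` in which `A` consists of the vectors with integral coordinates; in particular the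
coordinate functionals `e_k^*` lie in `A^*`. For `k < l` the `e_k ∧ e_l`-coordinate of `x` is the
`e_l`-coordinate of `x(e_k^*)`, so `x(A^*) ⊆ A` makes every coordinate of `x` in the basis
`(e_k ∧ e_l)_{k<l}` of `⋀² N'` integral, i.e. `x ∈ ⋀² A`. Conversely
`(a ∧ b)(f) = f(a)b - f(b)a ∈ A` when `a, b ∈ A` and `f(a), f(b) ∈ W'`.
-/

/-- The wedge `a ∧ b` as an element of the second exterior power. -/
noncomputable def wedge2 (K : Type*) [Field K] (N : Type*) [AddCommGroup N] [Module K N]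
    (a b : N) : ⋀[K]^2 N :=
  ⟨ExteriorAlgebra.ιMulti K 2 ![a, b], ExteriorAlgebra.ιMulti_range K 2 ⟨![a, b], rfl⟩⟩

/-- `⋀² A`: the `W'`-submodule of `⋀² N` spanned by wedges of elements of a `W'`-submodule
`A ⊆ N`. -/
noncomputable def lambda2 (W' K : Type*) [CommRing W'] [Field K] [Algebra W' K]
    (N : Type*) [AddCommGroup N] [Module K N] [Module W' N] [IsScalarTower W' K N]
    (A : Submodule W' N) : Submodule W' (⋀[K]^2 N) :=
  Submodule.span W' {w : ⋀[K]^2 N | ∃ a ∈ A, ∃ b ∈ A, w = wedge2 K N a b}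

open Module Set.powersetCard

lemma Module.Basis.extendOfIsLattice_repr {R K V κ : Type*} [CommRing R] [Field K] [Algebra R K]
    [IsFractionRing R K] [AddCommGroup V] [Module K V] [Module R V] [IsScalarTower R K V]
    {M : Submodule R V} [M.IsLattice K] (b : Basis κ R M) (m : M) (k : κ) :
    (b.extendOfIsLattice K).repr m k = algebraMap R K (b.repr m k) := by
  have : ((b.extendOfIsLattice K).coord k).restrictScalars R ∘ₗ M.subtype =
      Algebra.linearMap R K ∘ₗ b.coord k := by
    refine b.ext fun i => ?_
    simp only [LinearMap.comp_apply, Submodule.subtype_apply, ← b.extendOfIsLattice_apply K,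
      LinearMap.restrictScalars_apply, Basis.coord_apply, Basis.repr_self]
    obtain rfl | hik := eq_or_ne i k <;> simp [*]
  exact congr($this m)

lemma Set.powersetCard.eq_iff_ofFinEmbEquiv_symm_two {ι : Type*} [LinearOrder ι]
    {s t : Set.powersetCard ι 2} :
    s = t ↔ ofFinEmbEquiv.symm s 0 = ofFinEmbEquiv.symm t 0 ∧
      ofFinEmbEquiv.symm s 1 = ofFinEmbEquiv.symm t 1 := by
  rw [← ofFinEmbEquiv.symm.injective.eq_iff, DFunLike.ext_iff, Fin.forall_fin_two]

section Wedge

variable {K : Type*} [Field K] {N : Type*} [AddCommGroup N] [Module K N]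

lemma exteriorPower.ιMulti_family_two {ι : Type*} [LinearOrder ι] (v : ι → N)
    (s : Set.powersetCard ι 2) :
    exteriorPower.ιMulti_family K 2 v s =
      wedge2 K N (v (ofFinEmbEquiv.symm s 0)) (v (ofFinEmbEquiv.symm s 1)) := by
  apply Subtype.ext
  simp only [exteriorPower.ιMulti_family, exteriorPower.ιMulti_apply_coe, wedge2]
  congr 1
  ext i
  fin_cases i <;> rfl

def IsWedgeContraction (T : ⋀[K]^2 N →ₗ[K] Dual K N →ₗ[K] N) : Prop :=
  ∀ (a b : N) (f : Dual K N), T (wedge2 K N a b) f = f a • b - f b • a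

variable {T : ⋀[K]^2 N →ₗ[K] Dual K N →ₗ[K] N}

lemma exteriorPower_two_coord_eq (hT : IsWedgeContraction T) {ι : Type*} [LinearOrder ι]
    (B : Basis ι K N) (s : Set.powersetCard ι 2) :
    (B.exteriorPower 2).coord s =
      B.coord (ofFinEmbEquiv.symm s 1) ∘ₗ T.flip (B.coord (ofFinEmbEquiv.symm s 0)) := by
  refine (B.exteriorPower 2).ext fun t => ?_
  have ht := (ofFinEmbEquiv.symm t).strictMono (show (0 : Fin 2) < 1 by decide)
  have hs := (ofFinEmbEquiv.symm s).strictMono (show (0 : Fin 2) < 1 by decide)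
  rw [Basis.coord_apply, Basis.repr_self, LinearMap.comp_apply, LinearMap.flip_apply,
    exteriorPower.basis_apply, exteriorPower.ιMulti_family_two, hT]
  simp only [Basis.coord_apply, map_sub, map_smul, Basis.repr_self,
    Finsupp.single_apply, eq_iff_ofFinEmbEquiv_symm_two, smul_eq_mul]
  -- of the two products of Kronecker deltas only `t = s` survives: `t₁ = s₀, t₀ = s₁` would
  -- contradict `t₀ < t₁` and `s₀ < s₁`
  generalize ofFinEmbEquiv.symm t 0 = t₀, ofFinEmbEquiv.symm t 1 = t₁,
    ofFinEmbEquiv.symm s 0 = s₀, ofFinEmbEquiv.symm s 1 = s₁ at *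
  split_ifs <;> first | (exfalso; order) | simp_all

variable {W' : Type*} [CommRing W'] [Algebra W' K] [Module W' N] [IsScalarTower W' K N]
    (A : Submodule W' N)

lemma apply_mem_of_mem_lambda2 (hT : IsWedgeContraction T) {f : Dual K N}
    (hf : ∀ a ∈ A, f a ∈ Set.range (algebraMap W' K)) {x : ⋀[K]^2 N}
    (hx : x ∈ lambda2 W' K N A) : T x f ∈ A := by
  refine (Submodule.span_le (p := A.comap ((T.flip f).restrictScalars W'))).mpr ?_ hx
  rintro _ ⟨a, ha, b, hb, rfl⟩
  obtain ⟨c, hc⟩ := hf a ha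
  obtain ⟨d, hd⟩ := hf b hb
  simp only [SetLike.mem_coe, Submodule.mem_comap, LinearMap.restrictScalars_apply,
    LinearMap.flip_apply, hT a b f, ← hc, ← hd, algebraMap_smul]
  exact sub_mem (A.smul_mem c hb) (A.smul_mem d ha)

lemma mem_lambda2_of_forall_apply_mem (hT : IsWedgeContraction T) {ι : Type*} (B : Basis ι K N)
    (hBA : ∀ i, B i ∈ A) (hA : ∀ a ∈ A, ∀ i, B.repr a i ∈ Set.range (algebraMap W' K))
    {x : ⋀[K]^2 N}
    (hx : ∀ f : Dual K N, (∀ a ∈ A, f a ∈ Set.range (algebraMap W' K)) → T x f ∈ A) :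
    x ∈ lambda2 W' K N A := by
  let : LinearOrder ι := WellOrderingRel.isWellOrder.linearOrder
  rw [← (B.exteriorPower 2).linearCombination_repr x, Finsupp.linearCombination_apply]
  refine Submodule.finsuppSum_mem _ _ _ _ fun s _ => ?_
  obtain ⟨c, hc⟩ : (B.exteriorPower 2).repr x s ∈ Set.range (algebraMap W' K) := by
    rw [← Basis.coord_apply, exteriorPower_two_coord_eq hT]
    exact hA _ (hx _ fun a ha => hA a ha _) _
  rw [← hc, algebraMap_smul, exteriorPower.basis_apply, exteriorPower.ιMulti_family_two]
  exact Submodule.smul_mem _ _ (Submodule.subset_span ⟨_, hBA _, _, hBA _, rfl⟩)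

end Wedge

theorem stmt_6_general (W' : Type*) [CommRing W'] [IsDomain W'] [IsDiscreteValuationRing W']
    (K : Type*) [Field K] [Algebra W' K] [IsFractionRing W' K]
    (N' : Type*) [AddCommGroup N'] [Module K N'] [Module W' N'] [IsScalarTower W' K N']
    -- the action of `⋀² N'` on the dual space: `(a∧b)(f) = f(a)•b - f(b)•a`
    (T : ⋀[K]^2 N' →ₗ[K] Module.Dual K N' →ₗ[K] N')
    (hT : ∀ (a b : N') (f : Module.Dual K N'),
      T (wedge2 K N' a b) f = f a • b - f b • a)
    -- `A` is a full `W'`-lattice in `N'`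
    (A : Submodule W' N') (hAfg : A.FG) (hAfull : Submodule.span K (A : Set N') = ⊤)
    (x : ⋀[K]^2 N') :
    (∀ f : Module.Dual K N',
        (∀ a ∈ A, f a ∈ Set.range (algebraMap W' K)) → T x f ∈ A)
      ↔ x ∈ lambda2 W' K N' A := by
  have : A.IsLattice K := ⟨hAfg, hAfull⟩
  let b := Free.chooseBasis W' A
  refine ⟨mem_lambda2_of_forall_apply_mem A hT (b.extendOfIsLattice K) (fun i => ?_)
    (fun a ha i => ⟨_, (b.extendOfIsLattice_repr ⟨a, ha⟩ i).symm⟩),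
    fun hx f hf => apply_mem_of_mem_lambda2 A hT hf hx⟩
  rw [b.extendOfIsLattice_apply K]
  exact (b i).2

theorem stmt_6 (W' : Type*) [CommRing W'] [IsDomain W'] [IsDiscreteValuationRing W']
    (K : Type*) [Field K] [Algebra W' K] [IsFractionRing W' K]
    (N' : Type*) [AddCommGroup N'] [Module K N'] [Module W' N'] [IsScalarTower W' K N']
    (hdim : Module.finrank K N' = 4)
    -- the action of `⋀² N'` on the dual space: `(a∧b)(f) = f(a)•b - f(b)•a`
    (T : ⋀[K]^2 N' →ₗ[K] Module.Dual K N' →ₗ[K] N')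
    (hT : ∀ (a b : N') (f : Module.Dual K N'),
      T (wedge2 K N' a b) f = f a • b - f b • a)
    -- `A` is a full `W'`-lattice in `N'`
    (A : Submodule W' N') (hAfg : A.FG) (hAfull : Submodule.span K (A : Set N') = ⊤)
    (x : ⋀[K]^2 N') :
    (∀ f : Module.Dual K N',
        (∀ a ∈ A, f a ∈ Set.range (algebraMap W' K)) → T x f ∈ A)
      ↔ x ∈ lambda2 W' K N' A :=
  stmt_6_general W' K N' T hT A hAfg hAfull x
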